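/- The Cartesian product G □ H is sequentially distance preserving if and only if both G and H are sequentially distance preserving. -/

import Mathlib

open SimpleGraph

variable {α β : Type*}

/-- The lexicographic product `G[H]`. -/
def lexProd (G : SimpleGraph α) (H : SimpleGraph β) : SimpleGraph (α × β) where
  Adj p q := G.Adj p.1 q.1 ∨ (p.1 = q.1 ∧ H.Adj p.2 q.2)
  symm := by
    constructor
    rintro ⟨u, x⟩ ⟨v, y⟩ (h | ⟨h1, h2⟩)
    · exact Or.inl h.symm
    · exact Or.inr ⟨h1.symm, h2.symm⟩
  loopless := by
    constructor
    rintro ⟨u, x⟩ (h | ⟨-, h⟩)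
    · exact G.irrefl h
    · exact H.irrefl h

/-- The induced subgraph on `S` is an isometric subgraph of `G`. -/
def IsometricSet (G : SimpleGraph α) (S : Set α) : Prop :=
  ∀ a b : S, (G.induce S).edist a b = G.edist a.1 b.1

/-- The set of orders of isometric (induced) subgraphs of `G`. -/
def dpSet (G : SimpleGraph α) : Set ℕ :=
  {k | ∃ S : Finset α, S.card = k ∧ IsometricSet G ↑S}

/-- `G` is distance preserving. -/
def IsDP [Fintype α] (G : SimpleGraph α) : Prop :=
  G.Connected ∧ ∀ i : ℕ, 1 ≤ i → i ≤ Fintype.card α → i ∈ dpSet G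

/-- `l` is an sdp sequence for `G`. -/
def IsSdpList [Fintype α] (G : SimpleGraph α) (l : List α) : Prop :=
  l.Nodup ∧ (∀ v : α, v ∈ l) ∧
    ∀ s : ℕ, IsometricSet G {v : α | v ∉ l.take s}

/-- `G` is sequentially distance preserving. -/
def IsSDP [Fintype α] (G : SimpleGraph α) : Prop :=
  G.Connected ∧ ∃ l : List α, IsSdpList G l

/-!
Distances in `G □ H` add up: `d((a, x), (c, y)) = d_G(a, c) + d_H(x, y)`. Hence projecting a
geodesic of `G □ H` gives geodesics of both factors, so the projections of an isometric set of
`G □ H` are isometric. Along an sdp sequence of `G □ H` these projections lose at most one vertex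
per step, which yields sdp sequences of the factors. Conversely, removing the vertices of `G □ H`
in the lexicographic order of sdp sequences of `G` and `H` always leaves a set
`S' × T ∪ S × V(H)` with `S ⊆ S'` and `S`, `S'`, `T` isometric; a geodesic from `(a, x)` in the
first piece to `(c, y)` in the second can be routed through `(c, x)`, which lies in both.
-/

namespace SimpleGraph

variable {V W : Type*} {G : SimpleGraph V} {G' : SimpleGraph W}

theorem Hom.edist_le (f : G →g G') (u v : V) : G'.edist (f u) (f v) ≤ G.edist u v := by
  by_cases h : G.Reachable u v
  · obtain ⟨w, hw⟩ := h.exists_walk_length_eq_edist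
    rw [← hw, ← w.length_map f]
    exact SimpleGraph.edist_le _
  · rw [edist_eq_top_of_not_reachable h]
    exact le_top

variable {H : SimpleGraph W}

theorem Reachable.dist_boxProd {x y : V × W} (h : (G □ H).Reachable x y) :
    (G □ H).dist x y = G.dist x.1 y.1 + H.dist x.2 y.2 := by
  obtain ⟨hG, hH⟩ := reachable_boxProd.mp h
  have := edist_boxProd (G := G) (H := H) x y
  rw [← h.coe_dist_eq_edist, ← hG.coe_dist_eq_edist, ← hH.coe_dist_eq_edist] at this
  exact_mod_cast this

namespace Walk

@[simp]
theorem length_boxProdLeft {a₁ a₂ : V} (b : W) (w : G.Walk a₁ a₂) :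
    (w.boxProdLeft H b).length = w.length :=
  w.length_map _

@[simp]
theorem length_boxProdRight {b₁ b₂ : W} (a : V) (w : H.Walk b₁ b₂) :
    (w.boxProdRight G a).length = w.length :=
  w.length_map _

@[simp]
theorem support_boxProdLeft {a₁ a₂ : V} (b : W) (w : G.Walk a₁ a₂) :
    (w.boxProdLeft H b).support = w.support.map (·, b) :=
  w.support_map _

@[simp]
theorem support_boxProdRight {b₁ b₂ : W} (a : V) (w : H.Walk b₁ b₂) :
    (w.boxProdRight G a).support = w.support.map (a, ·) :=
  w.support_map _

theorem support_ofBoxProdLeft_subset [DecidableEq W] [DecidableRel G.Adj] {x y : V × W}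
    (w : (G □ H).Walk x y) : w.ofBoxProdLeft.support ⊆ w.support.map Prod.fst := by
  induction w with
  | nil => simp [ofBoxProdLeft]
  | @cons x v y h w ih =>
    unfold ofBoxProdLeft Or.by_cases
    split_ifs with hG
    · simpa using List.cons_subset_cons _ ih
    · obtain ⟨a, b⟩ := x
      obtain ⟨c, d⟩ := v
      obtain ⟨-, rfl : a = c⟩ := h.resolve_left hG
      exact List.Subset.trans ih (List.subset_cons_self _ _)

theorem support_ofBoxProdRight_subset [DecidableEq V] [DecidableRel H.Adj] {x y : V × W}
    (w : (G □ H).Walk x y) : w.ofBoxProdRight.support ⊆ w.support.map Prod.snd := by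
  induction w with
  | nil => simp [ofBoxProdRight]
  | @cons x v y h w ih =>
    unfold ofBoxProdRight Or.by_cases
    split_ifs with hH
    · simpa using List.cons_subset_cons _ ih
    · obtain ⟨a, b⟩ := x
      obtain ⟨c, d⟩ := v
      obtain ⟨-, rfl : b = d⟩ := (Or.symm h).resolve_left hH
      exact List.Subset.trans ih (List.subset_cons_self _ _)

end Walk

end SimpleGraph

section Isometric

variable {G : SimpleGraph α} {H : SimpleGraph β}

theorem isometricSet_iff_exists_walk {S : Set α} :
    IsometricSet G S ↔ ∀ a ∈ S, ∀ b ∈ S, G.Reachable a b →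
      ∃ w : G.Walk a b, w.length = G.dist a b ∧ ∀ x ∈ w.support, x ∈ S := by
  constructor
  · intro hS a ha b hb hab
    have hind : (G.induce S).Reachable ⟨a, ha⟩ ⟨b, hb⟩ := by
      rw [← edist_ne_top_iff_reachable, hS]
      exact edist_ne_top_iff_reachable.mpr hab
    obtain ⟨w, hw⟩ := hind.exists_walk_length_eq_dist
    refine ⟨w.map (Embedding.induce S).toHom, (w.length_map _).trans ?_, ?_⟩
    · rw [hw]
      exact_mod_cast hind.coe_dist_eq_edist.trans ((hS _ _).trans hab.coe_dist_eq_edist.symm)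
    · intro x hx
      have hsupp := w.support_map (Embedding.induce S).toHom
      obtain ⟨y, -, rfl⟩ := List.mem_map.mp (hsupp ▸ hx)
      exact y.2
  · rintro h ⟨a, ha⟩ ⟨b, hb⟩
    refine le_antisymm ?_ ((Embedding.induce S).toHom.edist_le _ _)
    by_cases hab : G.Reachable a b
    · obtain ⟨w, hw, hwS⟩ := h a ha b hb hab
      have hlen : (w.induce S hwS).length = w.length := by
        rw [← Walk.length_map (Embedding.induce S).toHom, Walk.map_induce]
        rfl -- the two walks agree up to unfolding the endpoints `⟨a, ha⟩.1 = a`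
      calc (G.induce S).edist ⟨a, ha⟩ ⟨b, hb⟩ ≤ (w.induce S hwS).length := edist_le _
        _ = G.edist a b := by rw [hlen, hw, hab.coe_dist_eq_edist]
    · simp [edist_eq_top_of_not_reachable hab]

theorem IsometricSet.prod {S : Set α} {T : Set β} (hS : IsometricSet G S)
    (hT : IsometricSet H T) : IsometricSet (G □ H) (S ×ˢ T) := by
  rw [isometricSet_iff_exists_walk] at *
  rintro ⟨a, x⟩ ⟨ha, hx⟩ ⟨c, y⟩ ⟨hc, hy⟩ hr
  obtain ⟨hac, hxy⟩ := reachable_boxProd.mp hr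
  obtain ⟨wG, hwG, hwGS⟩ := hS a ha c hc hac
  obtain ⟨wH, hwH, hwHT⟩ := hT x hx y hy hxy
  refine ⟨(wG.boxProdLeft H x).append (wH.boxProdRight G c), ?_, ?_⟩
  · simp [hr.dist_boxProd, hwG, hwH]
  · simp only [Walk.mem_support_append_iff, Walk.support_boxProdLeft,
      Walk.support_boxProdRight, List.mem_map]
    rintro _ (⟨u, hu, rfl⟩ | ⟨v, hv, rfl⟩)
    exacts [⟨hwGS u hu, hx⟩, ⟨hc, hwHT v hv⟩]

theorem isometricSet_univ : IsometricSet G Set.univ :=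
  isometricSet_iff_exists_walk.mpr fun _ _ _ _ hab =>
    (hab.exists_walk_length_eq_dist).imp fun _ hw => ⟨hw, fun _ _ => trivial⟩

theorem IsometricSet.union {P Q : Set α} (hP : IsometricSet G P) (hQ : IsometricSet G Q)
    (hgate : ∀ p ∈ P, ∀ q ∈ Q, ∃ m ∈ P ∩ Q, G.edist p m + G.edist m q = G.edist p q) :
    IsometricSet G (P ∪ Q) := by
  rw [isometricSet_iff_exists_walk] at *
  have key : ∀ p ∈ P, ∀ q ∈ Q, G.Reachable p q →
      ∃ w : G.Walk p q, w.length = G.dist p q ∧ ∀ x ∈ w.support, x ∈ P ∪ Q := by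
    intro p hp q hq hpq
    obtain ⟨m, ⟨hmP, hmQ⟩, hm⟩ := hgate p hp q hq
    have hfin := hm ▸ edist_ne_top_iff_reachable.mpr hpq
    have hpm : G.Reachable p m := edist_ne_top_iff_reachable.mp (WithTop.add_ne_top.mp hfin).1
    have hmq : G.Reachable m q := edist_ne_top_iff_reachable.mp (WithTop.add_ne_top.mp hfin).2
    obtain ⟨w₁, hw₁, hw₁P⟩ := hP p hp m hmP hpm
    obtain ⟨w₂, hw₂, hw₂Q⟩ := hQ m hmQ q hq hmq
    refine ⟨w₁.append w₂, ?_, ?_⟩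
    · rw [← hpm.coe_dist_eq_edist, ← hmq.coe_dist_eq_edist, ← hpq.coe_dist_eq_edist] at hm
      rw [Walk.length_append, hw₁, hw₂]
      exact_mod_cast hm
    · intro x hx
      rcases (w₁.mem_support_append_iff w₂).mp hx with hx | hx
      exacts [Or.inl (hw₁P x hx), Or.inr (hw₂Q x hx)]
  rintro a (ha | ha) b (hb | hb) hab
  · exact (hP a ha b hb hab).imp fun _ ⟨hw, hwP⟩ => ⟨hw, fun x hx => Or.inl (hwP x hx)⟩
  · exact key a ha b hb hab
  · obtain ⟨w, hw, hwPQ⟩ := key b hb a ha hab.symm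
    refine ⟨w.reverse, by rw [Walk.length_reverse, hw, SimpleGraph.dist_comm], fun x hx => ?_⟩
    rw [Walk.support_reverse, List.mem_reverse] at hx
    exact hwPQ x hx
  · exact (hQ a ha b hb hab).imp fun _ ⟨hw, hwQ⟩ => ⟨hw, fun x hx => Or.inr (hwQ x hx)⟩

theorem IsometricSet.prod_union_prod_univ {S S' : Set α} {T : Set β} (hS : IsometricSet G S)
    (hS' : IsometricSet G S') (hT : IsometricSet H T) (hSS' : S ⊆ S') :
    IsometricSet (G □ H) (S' ×ˢ T ∪ S ×ˢ Set.univ) :=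
  (hS'.prod hT).union (hS.prod isometricSet_univ) fun ⟨_, x⟩ ⟨_, hx⟩ ⟨c, _⟩ ⟨hc, _⟩ =>
    ⟨(c, x), ⟨⟨hSS' hc, hx⟩, hc, trivial⟩, by simp⟩

theorem IsometricSet.image_fst (hH : H.Preconnected) {S : Set (α × β)}
    (hS : IsometricSet (G □ H) S) : IsometricSet G (Prod.fst '' S) := by
  classical
  rw [isometricSet_iff_exists_walk] at *
  rintro _ ⟨⟨a, x⟩, hp, rfl⟩ _ ⟨⟨c, y⟩, hq, rfl⟩ hac
  have hr : (G □ H).Reachable (a, x) (c, y) := reachable_boxProd.mpr ⟨hac, hH x y⟩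
  obtain ⟨w, hw, hwS⟩ := hS _ hp _ hq hr
  refine ⟨w.ofBoxProdLeft, ?_, fun u hu => ?_⟩
  · have hG := dist_le w.ofBoxProdLeft
    have hH := dist_le w.ofBoxProdRight
    rw [w.length_boxProd, hr.dist_boxProd] at hw
    dsimp only at hw hG hH ⊢
    omega
  · obtain ⟨p, hp, rfl⟩ := List.mem_map.mp (w.support_ofBoxProdLeft_subset hu)
    exact ⟨p, hwS p hp, rfl⟩

theorem IsometricSet.image_snd (hG : G.Preconnected) {S : Set (α × β)}
    (hS : IsometricSet (G □ H) S) : IsometricSet H (Prod.snd '' S) := by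
  classical
  rw [isometricSet_iff_exists_walk] at *
  rintro _ ⟨⟨a, x⟩, hp, rfl⟩ _ ⟨⟨c, y⟩, hq, rfl⟩ hxy
  have hr : (G □ H).Reachable (a, x) (c, y) := reachable_boxProd.mpr ⟨hG a c, hxy⟩
  obtain ⟨w, hw, hwS⟩ := hS _ hp _ hq hr
  refine ⟨w.ofBoxProdRight, ?_, fun u hu => ?_⟩
  · have hG := dist_le w.ofBoxProdLeft
    have hH := dist_le w.ofBoxProdRight
    rw [w.length_boxProd, hr.dist_boxProd] at hw
    dsimp only at hw hG hH ⊢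
    omega
  · obtain ⟨p, hp, rfl⟩ := List.mem_map.mp (w.support_ofBoxProdRight_subset hu)
    exact ⟨p, hwS p hp, rfl⟩

end Isometric

theorem List.take_product {lG : List α} {lH : List β} (q : ℕ) {r : ℕ} (hr : r ≤ lH.length) :
    (lG ×ˢ lH).take (q * lH.length + r) = lG.take q ×ˢ lH ++ lG[q]?.toList ×ˢ lH.take r := by
  induction lG generalizing q with
  | nil => simp
  | cons a lG ih =>
    cases q with
    | zero =>
      rw [product_cons, take_append_of_le_length (by simpa using hr)]
      simp [map_take]
    | succ q =>
      rw [product_cons, show (q + 1) * lH.length + r = (lH.map (a, ·)).length + (q * lH.length + r)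
        by simp only [length_map]; ring, take_length_add_append, ih]
      simp

theorem exists_list_of_chain {f : ℕ → Set α} (hmono : ∀ t, f (t + 1) ⊆ f t)
    (hstep : ∀ t, (f t \ f (t + 1)).Subsingleton) {N : ℕ} (hN : f N = ∅) :
    ∃ l : List α, l.Nodup ∧ (∀ v, v ∈ l ↔ v ∈ f 0) ∧ ∀ s, ∃ t, f 0 \ {v | v ∈ l.take s} = f t := by
  induction N generalizing f with
  | zero => exact ⟨[], List.nodup_nil, by simp [hN], fun _ => ⟨0, by simp⟩⟩
  | succ N ih =>
    obtain ⟨l, hnd, hmem, htake⟩ :=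
      ih (f := fun t => f (t + 1)) (fun t => hmono (t + 1)) (fun t => hstep (t + 1)) hN
    by_cases h01 : f 0 ⊆ f 1
    · have h : f 1 = f 0 := (hmono 0).antisymm h01
      refine ⟨l, hnd, fun v => h ▸ hmem v, fun s => ?_⟩
      obtain ⟨t, ht⟩ := htake s
      exact ⟨t + 1, h ▸ ht⟩
    obtain ⟨a, ha0, ha1⟩ := Set.not_subset.mp h01
    have heq : ∀ v ∈ f 0, v ∉ f 1 → v = a := fun v hv0 hv1 => hstep 0 ⟨hv0, hv1⟩ ⟨ha0, ha1⟩
    refine ⟨a :: l, List.nodup_cons.mpr ⟨fun h => ha1 ((hmem a).mp h), hnd⟩, fun v => ?_, ?_⟩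
    · rw [List.mem_cons, hmem]
      exact ⟨by rintro (rfl | hv); exacts [ha0, hmono 0 hv],
        fun hv => (em (v ∈ f 1)).symm.imp_left (heq v hv)⟩
    rintro (_ | s)
    · exact ⟨0, by simp⟩
    obtain ⟨t, ht⟩ := htake s
    refine ⟨t + 1, ht ▸ Set.ext fun v => ?_⟩
    simp only [List.take_succ_cons, List.mem_cons, Set.mem_sdiff, Set.mem_ofPred_eq, not_or]
    exact ⟨fun ⟨hv0, hva, hvs⟩ => ⟨by_contra fun hv1 => hva (heq v hv0 hv1), hvs⟩,
      fun ⟨hv1, hvs⟩ => ⟨hmono 0 hv1, fun hva => ha1 (hva ▸ hv1), hvs⟩⟩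


theorem exists_isSdpList_of_image {γ : Type*} [Fintype α] {G : SimpleGraph α} {L : List γ}
    (hL : ∀ p, p ∈ L) {φ : γ → α} (hφ : Function.Surjective φ)
    (hiso : ∀ t, IsometricSet G (φ '' {p | p ∉ L.take t})) : ∃ l, IsSdpList G l := by
  set f : ℕ → Set α := fun t => φ '' {p | p ∉ L.take t}
  have hmono : ∀ t, f (t + 1) ⊆ f t := fun t =>
    Set.image_mono fun p hp h => hp (L.take_subset_take_left t.le_succ h)
  have hstep : ∀ t, (f t \ f (t + 1)).Subsingleton := by
    refine fun t => (Set.Subsingleton.image (s := {p | p ∈ L[t]?.toList}) ?_ φ).anti ?_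
    · intro p hp p' hp'
      simp_all
    · rintro _ ⟨⟨p, hp, rfl⟩, hnot⟩
      have : p ∈ L.take (t + 1) := by_contra fun h => hnot ⟨p, h, rfl⟩
      rw [List.take_add_one, List.mem_append] at this
      exact ⟨p, this.resolve_left hp, rfl⟩
  have hN : f L.length = ∅ := by simp [f, hL]
  have h0 : f 0 = Set.univ := by simp [f, hφ.range_eq]
  obtain ⟨l, hnd, hmem, htake⟩ := exists_list_of_chain hmono hstep hN
  refine ⟨l, hnd, fun v => (hmem v).mpr (h0 ▸ trivial), fun s => ?_⟩
  obtain ⟨t, ht⟩ := htake s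
  rw [h0, ← Set.compl_eq_univ_sdiff, Set.compl_ofPred] at ht
  exact ht ▸ hiso t

theorem IsSdpList.product [Fintype α] [Fintype β] {G : SimpleGraph α} {H : SimpleGraph β}
    {lG : List α} {lH : List β} (hG : IsSdpList G lG) (hH : IsSdpList H lH) :
    IsSdpList (G □ H) (lG ×ˢ lH) := by
  refine ⟨hG.1.product hH.1, fun p => List.mem_product.mpr ⟨hG.2.1 p.1, hH.2.1 p.2⟩, fun s => ?_⟩
  rcases isEmpty_or_nonempty β with hβ | ⟨⟨y⟩⟩
  · exact fun a => isEmptyElim a.1.2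
  have hn : 0 < lH.length := List.length_pos_of_mem (hH.2.1 y)
  obtain ⟨q, r, hr, rfl⟩ : ∃ q r, r ≤ lH.length ∧ s = q * lH.length + r :=
    ⟨s / lH.length, s % lH.length, (Nat.mod_lt _ hn).le, (Nat.div_add_mod' s _).symm⟩
  have hset : {p | p ∉ (lG ×ˢ lH).take (q * lH.length + r)} =
      {v | v ∉ lG.take q} ×ˢ {v | v ∉ lH.take r} ∪ {v | v ∉ lG.take (q + 1)} ×ˢ Set.univ := by
    ext ⟨a, x⟩
    simp only [List.take_product q hr, List.take_add_one, Set.mem_union, Set.mem_prod,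
      Set.mem_ofPred_eq, List.mem_append, List.mem_product, hH.2.1 x, Set.mem_univ]
    tauto
  rw [hset]
  exact (hG.2.2 (q + 1)).prod_union_prod_univ (hG.2.2 q) (hH.2.2 r)
    fun v hv h => hv (lG.take_subset_take_left q.le_succ h)

theorem stmt_10 (G : SimpleGraph α) (H : SimpleGraph β)
    [Fintype α] [Fintype β] :
    IsSDP (G □ H) ↔ IsSDP G ∧ IsSDP H := by
  constructor
  · rintro ⟨hconn, L, -, hL, hLiso⟩
    obtain ⟨hG, hH⟩ := connected_boxProd.mp hconn
    have := hG.nonempty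
    have := hH.nonempty
    exact ⟨⟨hG, exists_isSdpList_of_image hL Prod.fst_surjective
        fun t => (hLiso t).image_fst hH.preconnected⟩,
      ⟨hH, exists_isSdpList_of_image hL Prod.snd_surjective
        fun t => (hLiso t).image_snd hG.preconnected⟩⟩
  · rintro ⟨⟨hG, lG, hlG⟩, ⟨hH, lH, hlH⟩⟩
    exact ⟨hG.boxProd hH, lG ×ˢ lH, hlG.product hlH⟩
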